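/- arXiv:1608.00846 — 2 statements merged into one kernel-verified Lean document; each statement's English description precedes it below -/
import Mathlib

section
/- Let V be a finite-dimensional complex vector space and let Ξ_V be the space of alternating bilinear maps σ: V × V → V such that σ(u,v) ∈ span{u,v} for all u,v ∈ V. Then the natural contraction homomorphism from the dual space V* to Hom(Λ²V, V), sending δ to the map (u,v) ↦ δ(u)v − δ(v)u, is a linear isomorphism onto Ξ_V, provided dim V ≥ 3. -/
open Submodule LinearMap Module

private lemma aux_scalar {W : Type*} [AddCommGroup W] [Module ℂ W] (T : W →ₗ[ℂ] W)
    (h : ∀ w, T w ∈ Submodule.span ℂ ({w} : Set W)) : ∃ a : ℂ, ∀ w, T w = a • w := by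
  by_cases hW : ∀ w : W, w = 0
  · exact ⟨0, fun w => by rw [hW (T w), hW (((0:ℂ)) • w)]⟩
  · push_neg at hW
    obtain ⟨w0, hw0⟩ := hW
    obtain ⟨a, ha⟩ := Submodule.mem_span_singleton.mp (h w0)
    refine ⟨a, fun w => ?_⟩
    by_cases hw : w ∈ Submodule.span ℂ ({w0} : Set W)
    · obtain ⟨cc, hcc⟩ := Submodule.mem_span_singleton.mp hw
      rw [← hcc, map_smul, ← ha, smul_comm]
    · obtain ⟨b, hb⟩ := Submodule.mem_span_singleton.mp (h w)
      obtain ⟨d, hd⟩ := Submodule.mem_span_singleton.mp (h (w + w0))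
      rw [map_add, ← hb, ← ha] at hd
      have h1 : (d - b) • w = (a - d) • w0 := by
        linear_combination (norm := module) hd
      have hdb : d = b := by
        by_contra hne
        apply hw
        refine Submodule.mem_span_singleton.mpr ⟨(d - b)⁻¹ * (a - d), ?_⟩
        rw [mul_smul, ← h1, smul_smul, inv_mul_cancel₀ (sub_ne_zero.mpr hne), one_smul]
      rw [hdb, sub_self, zero_smul] at h1
      have had : a = b := by
        rcases smul_eq_zero.mp h1.symm with h | h
        · exact sub_eq_zero.mp h
        · exact absurd h hw0
      rw [← hb, had]

private lemma key_lemma {V : Type*} [AddCommGroup V] [Module ℂ V] [FiniteDimensional ℂ V]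
    (hdim : 3 ≤ Module.finrank ℂ V) (σ : V →ₗ[ℂ] V →ₗ[ℂ] V)
    (halt : ∀ u v : V, σ u v = - σ v u)
    (hspan : ∀ u v : V, σ u v ∈ Submodule.span ℂ ({u, v} : Set V)) :
    ∃ δ : Module.Dual ℂ V, ∀ u v : V, σ u v = δ u • v - δ v • u := by
  set n := Module.finrank ℂ V with hn
  have hn1 : ((n : ℂ) - 1) ≠ 0 := by
    intro h
    have : (n : ℂ) = 1 := by linear_combination h
    have : n = 1 := by exact_mod_cast this
    omega
  -- σ u u = 0
  have hzero : ∀ u : V, σ u u = 0 := by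
    intro u
    have := halt u u
    have h2 : σ u u + σ u u = 0 := add_eq_zero_iff_eq_neg.mpr this
    have := smul_eq_zero.mp (show (2:ℂ) • σ u u = 0 by rw [two_smul]; exact h2)
    rcases this with h | h
    · norm_num at h
    · exact h
  set δ : Module.Dual ℂ V := ((n : ℂ) - 1)⁻¹ • ((LinearMap.trace ℂ V) ∘ₗ σ) with hδ
  have hδu : ∀ u : V, δ u = ((n : ℂ) - 1)⁻¹ * (LinearMap.trace ℂ V (σ u)) := by
    intro u; simp [hδ]
  -- the main pointwise fact
  have key : ∀ u : V, u ≠ 0 → ∀ v : V, σ u v - δ u • v ∈ Submodule.span ℂ ({u} : Set V) := by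
    intro u hu
    set p : Submodule ℂ V := Submodule.span ℂ ({u} : Set V) with hp
    have hker : p ≤ LinearMap.ker (p.mkQ ∘ₗ σ u) := by
      intro x hx
      obtain ⟨cx, hcx⟩ := Submodule.mem_span_singleton.mp hx
      simp only [LinearMap.mem_ker, LinearMap.comp_apply]
      rw [← hcx, map_smul, hzero, smul_zero, map_zero]
    set T : (V ⧸ p) →ₗ[ℂ] (V ⧸ p) := p.liftQ (p.mkQ ∘ₗ σ u) hker with hT
    have hTq : ∀ q : V ⧸ p, T q ∈ Submodule.span ℂ ({q} : Set (V ⧸ p)) := by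
      intro q
      obtain ⟨v, rfl⟩ := p.mkQ_surjective q
      have : T (p.mkQ v) = p.mkQ (σ u v) := by simp [hT]
      rw [this]
      obtain ⟨s, t, hst⟩ := Submodule.mem_span_pair.mp (hspan u v)
      have hmu : p.mkQ u = 0 := by
        simp [hp, Submodule.Quotient.mk_eq_zero, Submodule.mem_span_singleton_self]
      refine Submodule.mem_span_singleton.mpr ⟨t, ?_⟩
      rw [← hst, map_add, map_smul, map_smul, hmu, smul_zero, zero_add]
    obtain ⟨a, haT⟩ := aux_scalar T hTq
    have hA : ∀ v : V, σ u v - a • v ∈ p := by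
      intro v
      have : p.mkQ (σ u v) = a • p.mkQ v := by
        have : T (p.mkQ v) = p.mkQ (σ u v) := by simp [hT]
        rw [← this, haT]
      have h2 : p.mkQ (σ u v - a • v) = 0 := by rw [map_sub, map_smul, this, sub_self]
      exact (Submodule.Quotient.mk_eq_zero p).mp h2
    -- now show δ u = a via trace
    have hsmul_inj : Function.Injective (fun cc : ℂ => cc • u) := smul_left_injective ℂ hu
    have hg0 : ∀ v : V, ∃ cc : ℂ, cc • u = σ u v - a • v := fun v =>
      Submodule.mem_span_singleton.mp (hA v)
    choose g0 hg0spec using hg0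
    have hgadd : ∀ v w : V, g0 (v + w) = g0 v + g0 w := by
      intro v w
      apply hsmul_inj
      show g0 (v + w) • u = (g0 v + g0 w) • u
      rw [hg0spec, add_smul, hg0spec, hg0spec, map_add]
      module
    have hgsmul : ∀ (cc : ℂ) (v : V), g0 (cc • v) = cc * g0 v := by
      intro cc v
      apply hsmul_inj
      show g0 (cc • v) • u = (cc * g0 v) • u
      rw [hg0spec, map_smul, mul_smul, hg0spec]
      module
    set g : V →ₗ[ℂ] ℂ := { toFun := g0, map_add' := hgadd, map_smul' := hgsmul } with hg
    have hgu : g u = -a := by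
      apply hsmul_inj
      show g0 u • u = (-a) • u
      rw [hg0spec u, hzero, zero_sub, neg_smul]
    have hσu : σ u = a • LinearMap.id + dualTensorHom ℂ V V (g ⊗ₜ[ℂ] u) := by
      ext v
      simp only [LinearMap.add_apply, LinearMap.smul_apply, LinearMap.id_apply,
        dualTensorHom_apply]
      have hgv : (g : V →ₗ[ℂ] ℂ) v • u = σ u v - a • v := hg0spec v
      rw [hgv]; abel
    have htrace : LinearMap.trace ℂ V (σ u) = ((n : ℂ) - 1) * a := by
      rw [hσu, map_add, map_smul, LinearMap.trace_id, trace_eq_contract_apply,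
        contractLeft_apply, hgu]
      rw [smul_eq_mul]
      push_cast [hn]
      ring
    have hδa : δ u = a := by
      rw [hδu, htrace, ← mul_assoc, inv_mul_cancel₀ hn1, one_mul]
    intro v
    rw [hδa]
    exact hA v
  refine ⟨δ, fun u v => ?_⟩
  by_cases hu : u = 0
  · subst hu; simp
  by_cases hv : v ∈ Submodule.span ℂ ({u} : Set V)
  · obtain ⟨cc, hcc⟩ := Submodule.mem_span_singleton.mp hv
    subst hcc
    rw [map_smul, hzero, smul_zero, map_smul]
    simp only [smul_eq_mul]
    rw [smul_smul, mul_comm, mul_smul]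
    abel
  · have hv0 : v ≠ 0 := by
      intro h; apply hv; rw [h]; exact Submodule.zero_mem _
    obtain ⟨s, hs⟩ := Submodule.mem_span_singleton.mp (key u hu v)
    obtain ⟨t, ht⟩ := Submodule.mem_span_singleton.mp (key v hv0 u)
    -- hs : s • u = σ u v - δ u • v,  ht : t • v = σ v u - δ v • u
    have hanti := halt u v
    -- σ u v = -(σ v u)
    have hrel : (s + δ v) • u + (t + δ u) • v = 0 := by
      have h1 : σ u v = δ u • v + s • u := by rw [hs]; abel
      have h2 : σ v u = δ v • u + t • v := by rw [ht]; abel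
      rw [h1, h2] at hanti
      linear_combination (norm := module) hanti
    have htdu : t + δ u = 0 := by
      by_contra hne
      apply hv
      refine Submodule.mem_span_singleton.mpr ⟨-(t + δ u)⁻¹ * (s + δ v), ?_⟩
      have h3 : (t + δ u) • v = -((s + δ v) • u) := by
        linear_combination (norm := module) hrel
      have h4 : (-(t + δ u)⁻¹ * (s + δ v)) • u = (t + δ u)⁻¹ • ((t + δ u) • v) := by
        rw [h3, smul_neg, smul_smul, neg_mul, neg_smul]
      rw [h4, smul_smul, inv_mul_cancel₀ hne, one_smul]
    rw [htdu, zero_smul, add_zero] at hrel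
    have hsv : s = -δ v := by
      rcases smul_eq_zero.mp hrel with h | h
      · linear_combination h
      · exact absurd h hu
    have h6 : σ u v = δ u • v + s • u := by rw [hs]; abel
    rw [h6, hsv, neg_smul]
    abel

/-- Let `V` be a finite-dimensional complex vector space of dimension `≥ 3`,
and let `Ξ_V` be the set of alternating bilinear maps `σ : V × V → V` such that
`σ(u,v) ∈ span{u,v}` for all `u, v ∈ V`.  Then the natural contraction homomorphism
`V* → Hom(Λ²V, V)`, sending `δ` to `(u,v) ↦ δ(u)v − δ(v)u`, is a linear map which is
injective with image exactly `Ξ_V`. -/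
theorem stmt0 (V : Type*) [AddCommGroup V] [Module ℂ V] [FiniteDimensional ℂ V]
    (hdim : 3 ≤ Module.finrank ℂ V)
    (Ξ : Set (V →ₗ[ℂ] V →ₗ[ℂ] V))
    (hΞ : Ξ = {σ | (∀ u v : V, σ u v = - σ v u) ∧
        ∀ u v : V, σ u v ∈ Submodule.span ℂ ({u, v} : Set V)})
    (c : Module.Dual ℂ V →ₗ[ℂ] (V →ₗ[ℂ] V →ₗ[ℂ] V))
    (hc : ∀ (δ : Module.Dual ℂ V) (u v : V), c δ u v = δ u • v - δ v • u) :
    Function.Injective c ∧ Set.range c = Ξ := by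
  have hexv : ∀ u : V, ∃ v : V, v ∉ Submodule.span ℂ ({u} : Set V) := by
    intro u
    by_contra h
    push_neg at h
    have htop : Submodule.span ℂ ({u} : Set V) = ⊤ := Submodule.eq_top_iff'.mpr h
    have h1 := finrank_span_le_card (R := ℂ) ({u} : Set V)
    rw [htop] at h1
    rw [finrank_top] at h1
    simp at h1
    omega
  constructor
  · intro δ1 δ2 h12
    ext u
    by_contra hne
    set δ := δ1 - δ2 with hδ
    have hδu : δ u ≠ 0 := sub_ne_zero.mpr hne
    have hc0 : ∀ v : V, δ u • v - δ v • u = 0 := by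
      intro v
      have : c δ = 0 := by rw [hδ, map_sub, h12, sub_self]
      have h2 := hc δ u v
      rw [this] at h2
      simpa using h2.symm
    obtain ⟨v, hv⟩ := hexv u
    apply hv
    refine Submodule.mem_span_singleton.mpr ⟨(δ u)⁻¹ * δ v, ?_⟩
    have h3 : δ u • v = δ v • u := by
      have := hc0 v; linear_combination (norm := module) this
    rw [mul_smul, ← h3, smul_smul, inv_mul_cancel₀ hδu, one_smul]
  · ext σ
    constructor
    · rintro ⟨δ, rfl⟩
      rw [hΞ]
      constructor
      · intro u v
        rw [hc, hc]
        abel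
      · intro u v
        rw [hc]
        have h1 : u ∈ Submodule.span ℂ ({u, v} : Set V) :=
          Submodule.subset_span (Set.mem_insert _ _)
        have h2 : v ∈ Submodule.span ℂ ({u, v} : Set V) :=
          Submodule.subset_span (Set.mem_insert_of_mem _ rfl)
        exact sub_mem (Submodule.smul_mem _ _ h2) (Submodule.smul_mem _ _ h1)
    · intro hσ
      rw [hΞ] at hσ
      obtain ⟨halt, hspan⟩ := hσ
      obtain ⟨δ, hδ⟩ := key_lemma hdim σ halt hspan
      refine ⟨δ, ?_⟩
      ext u v
      rw [hc]
      exact (hδ u v).symm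
end

section
/- On the total space of the tangent bundle π: T(M) → M of a manifold M equipped with a coframe ω = Σθⁱeᵢ, with coordinates λⁱ (the tautological functions λⁱ(v) = θⁱ(v)) and pulled-back forms ϑⁱ = π*θⁱ, let γ = Σᵢ λⁱ ∂/∂ϑⁱ be the geodesic flow. If ṽ = Σᵢ hᵢ(λ) ∂/∂λⁱ for holomorphic functions hᵢ of the fiber coordinates λ, then for u ∈ T(M) with x = π(u), dπ_u([[ṽ, γ], γ]_u) = 2 ω_x⁻¹(σ^ω_x(ω_x(u), ω_x(v))), where σ^ω is the structure function of ω and v = ω_x⁻¹(Σhᵢ(λ(u))eᵢ). -/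
open Finset

lemma aux_fderiv_sum_smul {ι : Type*} [Fintype ι]
    {E F : Type*} [NormedAddCommGroup E] [NormedSpace ℂ E]
    [NormedAddCommGroup F] [NormedSpace ℂ F]
    (f : ι → E → ℂ) (V : ι → E → F)
    (hf : ∀ k, Differentiable ℂ (f k)) (hV : ∀ k, Differentiable ℂ (V k))
    (u z : E) :
    fderiv ℂ (fun u => ∑ k, f k u • V k u) u z
      = ∑ k, (fderiv ℂ (f k) u z • V k u + f k u • fderiv ℂ (V k) u z) := by
  rw [fderiv_fun_sum (A := fun k y => f k y • V k y) (fun k _ => ((hf k u).smul (hV k u)))]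
  rw [ContinuousLinearMap.sum_apply]
  refine Finset.sum_congr rfl fun k _ => ?_
  rw [fderiv_fun_smul (hf k u) (hV k u)]
  simp only [ContinuousLinearMap.add_apply, ContinuousLinearMap.smul_apply,
    ContinuousLinearMap.smulRight_apply, ContinuousLinearMap.coe_smul', Pi.smul_apply]
  abel

lemma aux_bracket {ι : Type*} [Fintype ι]
    {E : Type*} [NormedAddCommGroup E] [NormedSpace ℂ E]
    (f g : ι → E → ℂ) (V W : ι → E → E)
    (hf : ∀ k, Differentiable ℂ (f k)) (hg : ∀ k, Differentiable ℂ (g k))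
    (hV : ∀ k, Differentiable ℂ (V k)) (hW : ∀ k, Differentiable ℂ (W k))
    (u : E) :
    VectorField.lieBracket ℂ (fun u => ∑ k, f k u • V k u) (fun u => ∑ j, g j u • W j u) u
      = ∑ k, ∑ j, ((f k u * g j u) • VectorField.lieBracket ℂ (V k) (W j) u
          + (f k u * fderiv ℂ (g j) u (V k u)) • W j u
          - (g j u * fderiv ℂ (f k) u (W j u)) • V k u) := by
  simp only [VectorField.lieBracket]
  have e1 : fderiv ℂ (fun u => ∑ j, g j u • W j u) u ((fun u => ∑ k, f k u • V k u) u)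
      = ∑ k, f k u • ∑ j, (fderiv ℂ (g j) u (V k u) • W j u + g j u • fderiv ℂ (W j) u (V k u)) := by
    show fderiv ℂ (fun u => ∑ j, g j u • W j u) u (∑ k, f k u • V k u) = _
    rw [map_sum]
    refine Finset.sum_congr rfl fun k _ => ?_
    rw [map_smul, aux_fderiv_sum_smul g W hg hW]
  have e2 : fderiv ℂ (fun u => ∑ k, f k u • V k u) u ((fun u => ∑ j, g j u • W j u) u)
      = ∑ j, g j u • ∑ k, (fderiv ℂ (f k) u (W j u) • V k u + f k u • fderiv ℂ (V k) u (W j u)) := by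
    show fderiv ℂ (fun u => ∑ k, f k u • V k u) u (∑ j, g j u • W j u) = _
    rw [map_sum]
    refine Finset.sum_congr rfl fun j _ => ?_
    rw [map_smul, aux_fderiv_sum_smul f V hf hV]
  rw [e1, e2]
  have e3 : (∑ j, g j u • ∑ k, (fderiv ℂ (f k) u (W j u) • V k u + f k u • fderiv ℂ (V k) u (W j u)))
      = ∑ k, ∑ j, g j u • (fderiv ℂ (f k) u (W j u) • V k u + f k u • fderiv ℂ (V k) u (W j u)) := by
    simp only [Finset.smul_sum]
    exact Finset.sum_comm
  rw [e3]
  simp only [Finset.smul_sum]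
  rw [← Finset.sum_sub_distrib]
  refine Finset.sum_congr rfl fun k _ => ?_
  rw [← Finset.sum_sub_distrib]
  refine Finset.sum_congr rfl fun j _ => ?_
  simp only [smul_add, smul_sub, smul_smul]
  module

/-- On the total space of the tangent bundle `π : T(M) → M` of a
manifold `M` with coframe `ω = Σ θⁱeᵢ`, with tautological functions `λⁱ(v) = θⁱ(v)`,
pulled-back forms `ϑⁱ = π*θⁱ` and geodesic flow `γ = Σᵢ λⁱ ∂/∂ϑⁱ`, if
`ṽ = Σᵢ hᵢ(λ) ∂/∂λⁱ` for holomorphic functions `hᵢ` of the fiber coordinates, then for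
`u ∈ T(M)` with `x = π(u)`:
`dπ_u([[ṽ, γ], γ]_u) = 2 ω_x⁻¹(σ^ω_x(ω_x(u), ω_x(v)))`, where `σ^ω` is the structure
function of `ω` and `v = ω_x⁻¹(Σ hᵢ(λ(u)) eᵢ)`.

Formalization: `M` is an open subset of `ℂⁿ`, `T(M) = M × ℂⁿ` with `π` the first
projection; `X i` is the frame dual to the coframe `(θ i)`; the vector fields
`∂/∂ϑⁱ = Vθ i` and `∂/∂λⁱ = Vlam i` on `T(M)` are characterized by the stated pairings and
bracket relations; `σ^ω(e_j, e_k) = Σᵢ Tⁱⱼₖ eᵢ`, so that the right-hand side is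
`2 Σᵢ (Σⱼₖ λʲ(u) h_k(λ(u)) Tⁱⱼₖ(x)) X i (x)`. -/
theorem stmt17 (n : ℕ) (M : Set (Fin n → ℂ)) (hM : IsOpen M)
    (θ : Fin n → (Fin n → ℂ) → ((Fin n → ℂ) →L[ℂ] ℂ))
    (hθdiff : ∀ i, Differentiable ℂ (θ i))
    (hcoframe : ∀ x ∈ M, Function.Bijective (fun v : Fin n → ℂ => fun i => θ i x v))
    (X : Fin n → (Fin n → ℂ) → (Fin n → ℂ))  -- the frame dual to the coframe
    (hdualX : ∀ x ∈ M, ∀ i j, θ i x (X j x) = if i = j then 1 else 0)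
    (T : Fin n → Fin n → Fin n → (Fin n → ℂ) → ℂ)  -- structure functions of `ω`
    (hTanti : ∀ i j k, ∀ x ∈ M, T i j k x = - T i k j x)
    -- the vector fields `∂/∂ϑⁱ` and `∂/∂λⁱ` on `T(M) = M × ℂⁿ`:
    (Vθ Vlam : Fin n → ((Fin n → ℂ) × (Fin n → ℂ)) → ((Fin n → ℂ) × (Fin n → ℂ)))
    (hVθdiff : ∀ i, Differentiable ℂ (Vθ i)) (hVlamdiff : ∀ i, Differentiable ℂ (Vlam i))
    -- `⟨∂/∂ϑⁱ, ϑʲ⟩ = δᵢⱼ` : `dπ(∂/∂ϑⁱ)` is the dual frame vector `X i`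
    (hVθ : ∀ u : (Fin n → ℂ) × (Fin n → ℂ), u.1 ∈ M → ∀ i, (Vθ i u).1 = X i u.1)
    -- `⟨∂/∂λⁱ, ϑʲ⟩ = 0` : `∂/∂λⁱ` is vertical
    (hVlam : ∀ u : (Fin n → ℂ) × (Fin n → ℂ), u.1 ∈ M → ∀ i, (Vlam i u).1 = 0)
    -- `⟨∂/∂ϑⁱ, dλʲ⟩ = 0` and `⟨∂/∂λⁱ, dλʲ⟩ = δᵢⱼ`:
    (hVthetalam : ∀ u, u.1 ∈ M → ∀ i j,
      fderiv ℂ (fun u' : (Fin n → ℂ) × (Fin n → ℂ) => θ j u'.1 u'.2) u (Vθ i u) = 0)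
    (hVlamlam : ∀ u, u.1 ∈ M → ∀ i j,
      fderiv ℂ (fun u' : (Fin n → ℂ) × (Fin n → ℂ) => θ j u'.1 u'.2) u (Vlam i u) =
        if i = j then 1 else 0)
    -- the bracket relations of Lemma `l.basis`:
    (hbθθ : ∀ u, u.1 ∈ M → ∀ j k, VectorField.lieBracket ℂ (Vθ j) (Vθ k) u =
      (2 : ℂ) • ∑ i, T i k j u.1 • Vθ i u)
    (hblamlam : ∀ u, u.1 ∈ M → ∀ j k, VectorField.lieBracket ℂ (Vlam j) (Vlam k) u = 0)
    (hbthetalam : ∀ u, u.1 ∈ M → ∀ j k, VectorField.lieBracket ℂ (Vθ j) (Vlam k) u = 0)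
    -- the holomorphic functions `hᵢ(λ)` and the vector fields `ṽ` and `γ`:
    (h : Fin n → (Fin n → ℂ) → ℂ) (hh : ∀ i, Differentiable ℂ (h i))
    (vtilde γ : ((Fin n → ℂ) × (Fin n → ℂ)) → ((Fin n → ℂ) × (Fin n → ℂ)))
    (hvtilde : vtilde = fun u => ∑ i, h i (fun j => θ j u.1 u.2) • Vlam i u)
    (hγ : γ = fun u => ∑ i, θ i u.1 u.2 • Vθ i u)  -- the geodesic flow `γ = Σ λⁱ ∂/∂ϑⁱ`
    (x : Fin n → ℂ) (hx : x ∈ M) (w : Fin n → ℂ) :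
    (VectorField.lieBracket ℂ (VectorField.lieBracket ℂ vtilde γ) γ (x, w)).1 =
      (2 : ℂ) • ∑ i, (∑ j, ∑ k,
        θ j x w * h k (fun l => θ l x w) * T i j k x) • X i x := by
  classical
  -- differentiability facts
  have hTdiff : ∀ j, Differentiable ℂ (fun u : (Fin n → ℂ) × (Fin n → ℂ) => θ j u.1 u.2) :=
    fun j => ((hθdiff j).comp differentiable_fst).clm_apply differentiable_snd
  have hTfdiff : Differentiable ℂ
      (fun u : (Fin n → ℂ) × (Fin n → ℂ) => (fun l => θ l u.1 u.2)) :=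
    differentiable_pi.mpr hTdiff
  have hhTdiff : ∀ k, Differentiable ℂ
      (fun u : (Fin n → ℂ) × (Fin n → ℂ) => h k (fun l => θ l u.1 u.2)) :=
    fun k => (hh k).comp hTfdiff
  -- the derivative of `h k ∘ λ` kills `Vθ j` over `M`
  have hDhθ : ∀ u : (Fin n → ℂ) × (Fin n → ℂ), u.1 ∈ M → ∀ k j,
      fderiv ℂ (fun u : (Fin n → ℂ) × (Fin n → ℂ) => h k (fun l => θ l u.1 u.2)) u (Vθ j u)
        = 0 := by
    intro u hu k j
    have hc : (fun u : (Fin n → ℂ) × (Fin n → ℂ) => h k (fun l => θ l u.1 u.2))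
        = (h k) ∘ (fun u : (Fin n → ℂ) × (Fin n → ℂ) => (fun l => θ l u.1 u.2)) := rfl
    rw [hc, fderiv_comp (x := u) ((hh k) _) (hTfdiff u), ContinuousLinearMap.comp_apply]
    have : (fderiv ℂ (fun u : (Fin n → ℂ) × (Fin n → ℂ) => (fun l => θ l u.1 u.2)) u) (Vθ j u)
        = 0 := by
      rw [fderiv_pi (fun l => (hTdiff l) u)]
      funext l
      exact hVthetalam u hu j l
    rw [this, map_zero]
  -- the auxiliary vector field `β = [vtilde, γ]` on `M × ℂⁿ`
  set β : ((Fin n → ℂ) × (Fin n → ℂ)) → ((Fin n → ℂ) × (Fin n → ℂ)) :=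
    fun u => ∑ k, h k (fun l => θ l u.1 u.2) • Vθ k u with hβ
  -- Claim A : `[vtilde, γ] = β` on `M × ℂⁿ`
  have claimA : ∀ u : (Fin n → ℂ) × (Fin n → ℂ), u.1 ∈ M →
      VectorField.lieBracket ℂ vtilde γ u = β u := by
    intro u hu
    rw [hvtilde, hγ]
    rw [aux_bracket (fun k u => h k (fun l => θ l u.1 u.2))
      (fun j (u : (Fin n → ℂ) × (Fin n → ℂ)) => θ j u.1 u.2) Vlam Vθ
      hhTdiff hTdiff hVlamdiff hVθdiff u]
    have hb0 : ∀ k j, VectorField.lieBracket ℂ (Vlam k) (Vθ j) u = 0 := by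
      intro k j
      rw [VectorField.lieBracket_swap, hbthetalam u hu j k, neg_zero]
    have hsum : ∀ k j,
        ((h k (fun l => θ l u.1 u.2) * θ j u.1 u.2) • VectorField.lieBracket ℂ (Vlam k) (Vθ j) u
          + (h k (fun l => θ l u.1 u.2) *
              fderiv ℂ (fun u : (Fin n → ℂ) × (Fin n → ℂ) => θ j u.1 u.2) u (Vlam k u)) • Vθ j u
          - (θ j u.1 u.2 *
              fderiv ℂ (fun u : (Fin n → ℂ) × (Fin n → ℂ) => h k (fun l => θ l u.1 u.2)) u
                (Vθ j u)) • Vlam k u)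
        = (if k = j then h k (fun l => θ l u.1 u.2) else 0) • Vθ j u := by
      intro k j
      rw [hb0 k j, hVlamlam u hu k j, hDhθ u hu k j, smul_zero, mul_zero, zero_smul, zero_add,
        sub_zero, mul_ite, mul_one, mul_zero]
    simp only [hsum]
    rw [hβ]
    refine Finset.sum_congr rfl fun k _ => ?_
    simp [ite_smul]
  -- Claim B : the value of `[β, γ]` at `(x, w)`
  have hu1 : ((x, w) : (Fin n → ℂ) × (Fin n → ℂ)).1 ∈ M := hx
  have claimB : VectorField.lieBracket ℂ β γ (x, w)
      = ∑ k, ∑ j, (h k (fun l => θ l x w) * θ j x w) •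
          ((2 : ℂ) • ∑ i, T i j k x • Vθ i (x, w)) := by
    rw [hβ, hγ]
    rw [aux_bracket (fun k u => h k (fun l => θ l u.1 u.2))
      (fun j (u : (Fin n → ℂ) × (Fin n → ℂ)) => θ j u.1 u.2) Vθ Vθ
      hhTdiff hTdiff hVθdiff hVθdiff (x, w)]
    refine Finset.sum_congr rfl fun k _ => ?_
    refine Finset.sum_congr rfl fun j _ => ?_
    rw [hVthetalam (x, w) hu1 k j, hDhθ (x, w) hu1 k j, mul_zero, zero_smul, add_zero,
      mul_zero, zero_smul, sub_zero, hbθθ (x, w) hu1 k j]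
  -- bridging: `[[vtilde, γ], γ] = [β, γ]` at `(x, w)`
  have hmem : {u : (Fin n → ℂ) × (Fin n → ℂ) | u.1 ∈ M} ∈ nhds ((x, w) : (Fin n → ℂ) × (Fin n → ℂ)) :=
    (hM.preimage continuous_fst).mem_nhds hx
  have heq : VectorField.lieBracket ℂ vtilde γ =ᶠ[nhds ((x, w) : (Fin n → ℂ) × (Fin n → ℂ))] β :=
    Filter.eventuallyEq_of_mem hmem (fun u hu => claimA u hu)
  have hbridge : VectorField.lieBracket ℂ (VectorField.lieBracket ℂ vtilde γ) γ (x, w)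
      = VectorField.lieBracket ℂ β γ (x, w) :=
    Filter.EventuallyEq.lieBracket_vectorField_eq heq Filter.EventuallyEq.rfl
  rw [hbridge, claimB]
  -- take first components and rearrange the sums
  have final : ∀ (c : Fin n → Fin n → ℂ) (t : Fin n → Fin n → Fin n → ℂ)
      (Y : Fin n → (Fin n → ℂ)),
      ∑ k, ∑ j, c k j • ((2:ℂ) • ∑ i, t i j k • Y i)
        = (2:ℂ) • ∑ i, (∑ j, ∑ k, c k j * t i j k) • Y i := by
    intro c t Y
    have step1 : ∑ k, ∑ j, c k j • ((2:ℂ) • ∑ i, t i j k • Y i)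
        = ∑ k, ∑ j, ∑ i, ((2:ℂ) * (c k j * t i j k)) • Y i := by
      refine Finset.sum_congr rfl fun k _ => Finset.sum_congr rfl fun j _ => ?_
      rw [Finset.smul_sum, Finset.smul_sum]
      refine Finset.sum_congr rfl fun i _ => ?_
      rw [smul_smul, smul_smul]
      ring_nf
    have step2 : ∑ k, ∑ j, ∑ i, ((2:ℂ) * (c k j * t i j k)) • Y i
        = ∑ i, ∑ j, ∑ k, ((2:ℂ) * (c k j * t i j k)) • Y i := by
      rw [Finset.sum_comm]
      refine (Finset.sum_congr rfl fun j _ => Finset.sum_comm).trans ?_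
      exact Finset.sum_comm
    rw [step1, step2, Finset.smul_sum]
    refine Finset.sum_congr rfl fun i _ => ?_
    rw [smul_smul, Finset.mul_sum, Finset.sum_smul]
    refine Finset.sum_congr rfl fun j _ => ?_
    rw [Finset.mul_sum, Finset.sum_smul]
  have hX : ∀ i, (Vθ i ((x, w) : (Fin n → ℂ) × (Fin n → ℂ))).1 = X i x :=
    fun i => hVθ (x, w) hx i
  simp only [Prod.fst_sum, Prod.smul_fst, hX]
  rw [final (fun k j => h k (fun l => θ l x w) * θ j x w)
    (fun i j k => T i j k x) (fun i => X i x)]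
  refine congrArg _ (Finset.sum_congr rfl fun i _ => ?_)
  congr 1
  exact Finset.sum_congr rfl fun j _ => Finset.sum_congr rfl fun k _ => by ring
end
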